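/- arXiv:1402.3473 — 8 statements merged into one kernel-verified Lean document; each statement's English description precedes it below -/
import Mathlib

section
/- Let σ be an interval model of a graph G, let p be a position, and let w be a vertex. If some vertex of the closed neighborhood of w in G has its ending event at position at most p, and some vertex of the closed neighborhood of w has its starting event at position greater than p, then w lies in the section Ω_σ(p), i.e., σ(beg w) ≤ p < σ(end w). -/
/-- A combinatorial interval model of a graph `G`: an injection from the `2n` events
`beg v` (encoded `Sum.inl v`) and `end v` (encoded `Sum.inr v`) onto the positions
`{1, …, 2n}` such that each interval starts before it ends, and two distinct
vertices are non-adjacent iff their intervals are disjoint. -/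
structure IntervalModel {V : Type*} [Fintype V] (G : SimpleGraph V) where
  σ : V ⊕ V → ℕ
  inj : Function.Injective σ
  lb : ∀ e, 1 ≤ σ e
  ub : ∀ e, σ e ≤ 2 * Fintype.card V
  surj : ∀ i : ℕ, 1 ≤ i → i ≤ 2 * Fintype.card V → ∃ e, σ e = i
  begEnd : ∀ v, σ (Sum.inl v) < σ (Sum.inr v)
  adjIff : ∀ u v, u ≠ v →
    (¬ G.Adj u v ↔ σ (Sum.inr v) < σ (Sum.inl u) ∨ σ (Sum.inr u) < σ (Sum.inl v))

/-- The section of an interval model at position `p`: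
vertices whose interval is "pinned" just after position `p`. -/
def intervalSection {V : Type*} [Fintype V] {G : SimpleGraph V}
    (M : IntervalModel G) (p : ℕ) : Set V :=
  {v | M.σ (Sum.inl v) ≤ p ∧ p < M.σ (Sum.inr v)}

/-- The events of a set of vertices. -/
def eventsOf {V : Type*} (X : Set V) : Set (V ⊕ V) :=
  (Sum.inl : V → V ⊕ V) '' X ∪ (Sum.inr : V → V ⊕ V) '' X

/-- The vertex set (in the ambient graph) of a connected component of an induced subgraph. -/
def compSupp {V : Type*} {s : Set V} {H : SimpleGraph s}
    (c : H.ConnectedComponent) : Set V :=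
  Subtype.val '' c.supp

/-- If some vertex of the closed neighborhood of `w` has its ending event at position
at most `p`, and some vertex of the closed neighborhood of `w` has its starting event
at position greater than `p`, then `w` lies in the section at position `p`. -/
theorem statement_4 {V : Type*} [Fintype V] (G : SimpleGraph V)
    (M : IntervalModel G) (p : ℕ) (w : V)
    (h₁ : ∃ x, (x = w ∨ G.Adj w x) ∧ M.σ (Sum.inr x) ≤ p)
    (h₂ : ∃ y, (y = w ∨ G.Adj w y) ∧ p < M.σ (Sum.inl y)) :
    M.σ (Sum.inl w) ≤ p ∧ p < M.σ (Sum.inr w) := by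
  obtain ⟨x, hx, hxp⟩ := h₁
  obtain ⟨y, hy, hyp⟩ := h₂
  constructor
  · rcases hx with rfl | hadj
    · have := M.begEnd x; omega
    · have hne : (w : V) ≠ x := G.ne_of_adj hadj
      have : ¬ (M.σ (Sum.inr x) < M.σ (Sum.inl w) ∨ M.σ (Sum.inr w) < M.σ (Sum.inl x)) :=
        fun hD => ((M.adjIff w x hne).mpr hD) hadj
      push_neg at this
      omega
  · rcases hy with rfl | hadj
    · have := M.begEnd y; omega
    · have hne : (w : V) ≠ y := G.ne_of_adj hadj
      have : ¬ (M.σ (Sum.inr y) < M.σ (Sum.inl w) ∨ M.σ (Sum.inr w) < M.σ (Sum.inl y)) :=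
        fun hD => ((M.adjIff w y hne).mpr hD) hadj
      push_neg at this
      omega
end

section
/- Let G be a graph admitting a completion F into an interval graph, and let A ⊆ V(G). Then the number of neighborhood classes with respect to A (equivalence classes of vertices outside A under v₁ ~ v₂ iff N_G(v₁) ∩ A = N_G(v₂) ∩ A) is at most (2|A|+1)² + |F|. -/
/-!
Let `M` be an interval model of `G ⊔ F`. For `v ∉ A`, whether `v` is adjacent in `G ⊔ F` to
`a ∈ A` only depends on which of the `2|A|` events of `A` occur before the beginning and before
the end of `v`'s interval. Each of these two sets is an initial segment of the events of `A` in the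
order of `M`, of which there are only `2|A| + 1`, so `G ⊔ F` has at most `(2|A| + 1)²`
neighbourhood classes with respect to `A`. Passing from `G ⊔ F` to `G` changes the neighbourhood
only of vertices having an `F`-edge into `A`, and such a vertex is determined by that edge.
-/

open Finset

namespace Finset

variable {α β : Type*} [LinearOrder β]

theorem filter_lt_eq_of_card_eq (s : Finset α) (f : α → β) {t t' : β}
    (h : #(s.filter (f · < t)) = #(s.filter (f · < t'))) :
    s.filter (f · < t) = s.filter (f · < t') := by
  wlog htt : t ≤ t' generalizing t t'
  · exact (this h.symm (le_of_not_ge htt)).symm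
  exact eq_of_subset_of_card_le (monotone_filter_right s fun _ _ hx => hx.trans_le htt) h.ge

theorem card_image_filter_lt_le {ι : Type*} [DecidableEq α] (s : Finset α) (f : α → β)
    (T : Finset ι) (τ : ι → β) :
    #(T.image fun i => s.filter (f · < τ i)) ≤ #s + 1 := by
  calc #(T.image fun i => s.filter (f · < τ i)) ≤ #(range (#s + 1)) := by
        refine card_le_card_of_injOn card ?_ ?_
        · simp only [coe_image, Set.mapsTo_image_iff, coe_range]
          exact fun i _ => Nat.lt_succ_of_le (card_filter_le _ _)
        · simp only [coe_image, Set.InjOn, Set.mem_image, mem_coe]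
          rintro _ ⟨i, -, rfl⟩ _ ⟨j, -, rfl⟩ h
          exact filter_lt_eq_of_card_eq s f h
    _ = #s + 1 := card_range _

end Finset

namespace IntervalModel

variable {V : Type*} [Fintype V] {H : SimpleGraph V}

theorem adj_iff (M : IntervalModel H) {u v : V} (huv : u ≠ v) :
    H.Adj u v ↔ ¬ M.σ (.inr v) < M.σ (.inl u) ∧ M.σ (.inl v) < M.σ (.inr u) := by
  have hne : M.σ (.inr u) ≠ M.σ (.inl v) := M.inj.ne Sum.inr_ne_inl
  rw [← not_iff_not, M.adjIff u v huv, not_and_or, not_not, not_lt, le_iff_lt_or_eq,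
    or_iff_left hne]

theorem card_image_filter_adj_le [DecidableEq V] [DecidableRel H.Adj] (M : IntervalModel H)
    (A : Finset V) :
    #((univ.filter (· ∉ A)).image fun v => A.filter (H.Adj v ·)) ≤ (2 * #A + 1) ^ 2 := by
  set s := univ.filter (· ∉ A)
  set before : ℕ → Finset (V ⊕ V) := fun t => (A.disjSum A).filter (M.σ · < t)
  set profile : V → Finset (V ⊕ V) × Finset (V ⊕ V) :=
    fun v => (before (M.σ (.inl v)), before (M.σ (.inr v)))
  have hneighbours : ∀ v ∈ s, A.filter (H.Adj v ·) =
      A.filter fun a => Sum.inr a ∉ (profile v).1 ∧ Sum.inl a ∈ (profile v).2 := by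
    intro v hv
    refine filter_congr fun a ha => ?_
    have hva : v ≠ a := by rintro rfl; exact (mem_filter.mp hv).2 ha
    simp [profile, before, M.adj_iff hva, ha]
  have hbefore : ∀ e : V → V ⊕ V, #(s.image fun v => before (M.σ (e v))) ≤ 2 * #A + 1 := by
    intro e
    simpa [two_mul] using card_image_filter_lt_le (A.disjSum A) M.σ s (M.σ ∘ e)
  calc #(s.image fun v => A.filter (H.Adj v ·))
      = #((s.image profile).image fun p =>
          A.filter fun a => Sum.inr a ∉ p.1 ∧ Sum.inl a ∈ p.2) := by
        rw [image_image, image_congr hneighbours]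
        rfl
    _ ≤ #(s.image profile) := card_image_le
    _ ≤ #((s.image profile).image Prod.fst ×ˢ (s.image profile).image Prod.snd) :=
        card_le_card subset_product
    _ ≤ (2 * #A + 1) * (2 * #A + 1) := by
        rw [card_product, image_image, image_image]
        exact Nat.mul_le_mul (hbefore Sum.inl) (hbefore Sum.inr)
    _ = (2 * #A + 1) ^ 2 := (sq _).symm

end IntervalModel

namespace SimpleGraph

variable {V : Type*} [Fintype V] (G F : SimpleGraph V) [DecidableRel F.Adj]

theorem card_filter_exists_adj_le_card_edgeFinset {s A : Finset V} (hsA : Disjoint s A) :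
    #(s.filter fun v => ∃ a ∈ A, F.Adj v a) ≤ #F.edgeFinset := by
  refine card_le_card_of_forall_subsingleton (fun v e => ∃ a ∈ A, F.Adj v a ∧ e = s(v, a))
    (fun v hv => ?_) (fun e _ => ?_)
  · obtain ⟨a, ha, hva⟩ := (mem_filter.mp hv).2
    exact ⟨s(v, a), F.mem_edgeFinset.mpr hva, a, ha, hva, rfl⟩
  · rintro v ⟨hv, a, ha, -, rfl⟩ w ⟨hw, b, hb, -, hab⟩
    rcases Sym2.eq_iff.mp hab with ⟨hvw, -⟩ | ⟨hvb, -⟩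
    · exact hvw
    · exact absurd (hvb ▸ hb) (Finset.disjoint_left.mp hsA (mem_filter.mp hv).1)

theorem card_image_filter_adj_le_card_image_filter_sup_adj_add [DecidableEq V] [DecidableRel G.Adj]
    (A : Finset V) :
    #((univ.filter (· ∉ A)).image fun v => A.filter (G.Adj v ·)) ≤
      #((univ.filter (· ∉ A)).image fun v => A.filter ((G ⊔ F).Adj v ·)) + #F.edgeFinset := by
  set s := univ.filter (· ∉ A)
  set hasFEdge : V → Prop := fun v => ∃ a ∈ A, F.Adj v a
  have hsA : Disjoint s A := Finset.disjoint_left.mpr fun v hv => (mem_filter.mp hv).2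
  have hsame : ∀ v ∈ s.filter (¬ hasFEdge ·),
      A.filter (G.Adj v ·) = A.filter ((G ⊔ F).Adj v ·) := by
    intro v hv
    refine filter_congr fun a ha => ?_
    have hFva : ¬ F.Adj v a := fun h => (mem_filter.mp hv).2 ⟨a, ha, h⟩
    simp [hFva]
  calc #(s.image fun v => A.filter (G.Adj v ·))
      = #((s.filter (¬ hasFEdge ·)).image (fun v => A.filter (G.Adj v ·)) ∪
          (s.filter hasFEdge).image fun v => A.filter (G.Adj v ·)) := by
        rw [← image_union, union_comm, filter_union_filter_not_eq]
    _ ≤ #((s.filter (¬ hasFEdge ·)).image fun v => A.filter (G.Adj v ·)) +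
          #((s.filter hasFEdge).image fun v => A.filter (G.Adj v ·)) := card_union_le _ _
    _ ≤ #(s.image fun v => A.filter ((G ⊔ F).Adj v ·)) + #F.edgeFinset := by
        refine Nat.add_le_add ?_ (card_image_le.trans
          (card_filter_exists_adj_le_card_edgeFinset F hsA))
        rw [image_congr hsame]
        exact card_le_card (image_subset_image (filter_subset _ _))

end SimpleGraph

theorem statement_6_general {V : Type*} [Fintype V] [DecidableEq V]
    (G F : SimpleGraph V) [DecidableRel G.Adj] [DecidableRel F.Adj]
    (hint : Nonempty (IntervalModel (G ⊔ F)))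
    (A : Finset V) :
    ((Finset.univ.filter fun v : V => v ∉ A).image
        (fun v => A.filter fun a => G.Adj v a)).card
      ≤ (2 * A.card + 1) ^ 2 + F.edgeFinset.card := by
  obtain ⟨M⟩ := hint
  exact (G.card_image_filter_adj_le_card_image_filter_sup_adj_add F A).trans
    (Nat.add_le_add_right (M.card_image_filter_adj_le A) _)

/-- If `G` admits a completion `F` into an interval graph and `A ⊆ V(G)`, then
the number of neighborhood classes with respect to `A` (distinct sets `N_G(v) ∩ A`
over `v ∉ A`) is at most `(2|A|+1)² + |F|`. -/
theorem statement_6 {V : Type*} [Fintype V] [DecidableEq V]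
    (G F : SimpleGraph V) [DecidableRel G.Adj] [DecidableRel F.Adj]
    (hdisj : ∀ u v, F.Adj u v → ¬ G.Adj u v)
    (hint : Nonempty (IntervalModel (G ⊔ F)))
    (A : Finset V) :
    ((Finset.univ.filter fun v : V => v ∉ A).image
        (fun v => A.filter fun a => G.Adj v a)).card
      ≤ (2 * A.card + 1) ^ 2 + F.edgeFinset.card :=
  statement_6_general G F hint A
end

section
/- Let G be a graph, F a completion of G into an interval graph with model σ, and let C₁, C₂ be two distinct connected components of G ∖ A for some A ⊆ V(G), both untouched by F (no edge of F has an endpoint in C₁ ∪ C₂). Then in σ, either all events of C₁ appear before all events of C₂, or all events of C₂ appear before all events of C₁. -/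
lemma cover_walk {V : Type*} [Fintype V] {H K : SimpleGraph V}
    (M : IntervalModel H) (hKH : K ≤ H) {s : Set V} {u v : ↥s}
    (w : (K.induce s).Walk u v) (p : ℕ) :
    p < M.σ (Sum.inr (v:V)) → M.σ (Sum.inr (u:V)) ≤ p →
    ∃ x ∈ w.support, M.σ (Sum.inl (x:V)) ≤ p ∧ p < M.σ (Sum.inr (x:V)) := by
  induction w with
  | nil => intro h2 h1; omega
  | @cons a b c hab w ih =>
    intro h2 h1
    by_cases hb : M.σ (Sum.inr (b:V)) ≤ p
    · obtain ⟨x, hx, h⟩ := ih h2 hb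
      exact ⟨x, by simp [hx], h⟩
    · push_neg at hb
      have hadj : K.Adj ↑a ↑b := hab
      have hH : H.Adj ↑a ↑b := hKH hadj
      have hne : (a:V) ≠ (b:V) := hadj.ne
      have hnd : ¬ (M.σ (Sum.inr (b:V)) < M.σ (Sum.inl (a:V)) ∨
          M.σ (Sum.inr (a:V)) < M.σ (Sum.inl (b:V))) :=
        fun hd => ((M.adjIff _ _ hne).mpr hd) hH
      push_neg at hnd
      exact ⟨b, by simp, by omega, hb⟩

lemma cover_comp {V : Type*} [Fintype V] {H K : SimpleGraph V}
    (M : IntervalModel H) (hKH : K ≤ H) {s : Set V}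
    (c : (K.induce s).ConnectedComponent) {u v : ↥s}
    (hu : u ∈ c.supp) (hv : v ∈ c.supp) (p : ℕ)
    (h1 : M.σ (Sum.inl (u:V)) ≤ p) (h2 : p < M.σ (Sum.inr (v:V))) :
    ∃ x ∈ c.supp, M.σ (Sum.inl (x:V)) ≤ p ∧ p < M.σ (Sum.inr (x:V)) := by
  classical
  by_cases hp : p < M.σ (Sum.inr (u:V))
  · exact ⟨u, hu, h1, hp⟩
  push_neg at hp
  rw [SimpleGraph.ConnectedComponent.mem_supp_iff] at hu hv
  have hreach : (K.induce s).Reachable u v :=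
    SimpleGraph.ConnectedComponent.eq.mp (hu.trans hv.symm)
  obtain ⟨w⟩ := hreach
  obtain ⟨x, hx, hcov⟩ := cover_walk M hKH w p h2 hp
  refine ⟨x, ?_, hcov⟩
  have hr : (K.induce s).Reachable u x := ⟨w.takeUntil x hx⟩
  rw [SimpleGraph.ConnectedComponent.mem_supp_iff, ← hu]
  exact SimpleGraph.ConnectedComponent.eq.mpr hr.symm

/-- Let `F` be a completion of `G` with model `σ` of `G+F`, and let `C₁, C₂` be two
distinct connected components of `G ∖ A`, both untouched by `F`. Then in `σ` either
all events of `C₁` appear before all events of `C₂`, or vice versa. -/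
theorem statement_8 {V : Type*} [Fintype V] (G F : SimpleGraph V)
    (hdisj : ∀ u v, F.Adj u v → ¬ G.Adj u v)
    (M : IntervalModel (G ⊔ F)) (A : Set V)
    (c₁ c₂ : (G.induce Aᶜ).ConnectedComponent) (hne : c₁ ≠ c₂)
    (huntouch : ∀ v w, F.Adj v w → v ∉ compSupp c₁ ∪ compSupp c₂) :
    (∀ ε₁ ∈ eventsOf (compSupp c₁), ∀ ε₂ ∈ eventsOf (compSupp c₂), M.σ ε₁ < M.σ ε₂) ∨
    (∀ ε₂ ∈ eventsOf (compSupp c₂), ∀ ε₁ ∈ eventsOf (compSupp c₁), M.σ ε₂ < M.σ ε₁) := by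
  classical
  have cross : ∀ u ∈ c₁.supp, ∀ w ∈ c₂.supp,
      M.σ (Sum.inr (w:V)) < M.σ (Sum.inl (u:V)) ∨
      M.σ (Sum.inr (u:V)) < M.σ (Sum.inl (w:V)) := by
    intro u hu w hw
    have hu' := (SimpleGraph.ConnectedComponent.mem_supp_iff _ _).mp hu
    have hw' := (SimpleGraph.ConnectedComponent.mem_supp_iff _ _).mp hw
    have hne' : (u:V) ≠ (w:V) := by
      intro h
      apply hne
      rw [← hu', ← hw']
      congr 1
      exact Subtype.ext h
    apply (M.adjIff _ _ hne').mp
    intro hadj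
    rcases (SimpleGraph.sup_adj _ _ _ _).mp hadj with hG | hF
    · apply hne
      have hindadj : (G.induce Aᶜ).Adj u w := hG
      rw [← hu', ← hw']
      exact SimpleGraph.ConnectedComponent.eq.mpr hindadj.reachable
    · exact huntouch _ _ hF (Or.inl ⟨u, hu, rfl⟩)
  obtain ⟨r₁, hr₁⟩ := c₁.exists_rep
  obtain ⟨r₂, hr₂⟩ := c₂.exists_rep
  have hs₁ : c₁.supp.Nonempty := ⟨r₁, (SimpleGraph.ConnectedComponent.mem_supp_iff _ _).mpr hr₁⟩
  have hs₂ : c₂.supp.Nonempty := ⟨r₂, (SimpleGraph.ConnectedComponent.mem_supp_iff _ _).mpr hr₂⟩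
  obtain ⟨u₁, hu₁, hu₁min⟩ := Set.exists_min_image c₁.supp
    (fun x => M.σ (Sum.inl (x:V))) (Set.toFinite _) hs₁
  obtain ⟨v₁, hv₁, hv₁max⟩ := Set.exists_max_image c₁.supp
    (fun x => M.σ (Sum.inr (x:V))) (Set.toFinite _) hs₁
  obtain ⟨u₂, hu₂, hu₂min⟩ := Set.exists_min_image c₂.supp
    (fun x => M.σ (Sum.inl (x:V))) (Set.toFinite _) hs₂
  obtain ⟨v₂, hv₂, hv₂max⟩ := Set.exists_max_image c₂.supp
    (fun x => M.σ (Sum.inr (x:V))) (Set.toFinite _) hs₂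
  have bound₁ : ∀ ε ∈ eventsOf (compSupp c₁),
      M.σ (Sum.inl (u₁:V)) ≤ M.σ ε ∧ M.σ ε ≤ M.σ (Sum.inr (v₁:V)) := by
    rintro ε (⟨x, ⟨x', hx', rfl⟩, rfl⟩ | ⟨x, ⟨x', hx', rfl⟩, rfl⟩)
    · exact ⟨hu₁min x' hx', le_of_lt (lt_of_lt_of_le (M.begEnd _) (hv₁max x' hx'))⟩
    · exact ⟨le_of_lt (lt_of_le_of_lt (hu₁min x' hx') (M.begEnd _)), hv₁max x' hx'⟩
  have bound₂ : ∀ ε ∈ eventsOf (compSupp c₂),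
      M.σ (Sum.inl (u₂:V)) ≤ M.σ ε ∧ M.σ ε ≤ M.σ (Sum.inr (v₂:V)) := by
    rintro ε (⟨x, ⟨x', hx', rfl⟩, rfl⟩ | ⟨x, ⟨x', hx', rfl⟩, rfl⟩)
    · exact ⟨hu₂min x' hx', le_of_lt (lt_of_lt_of_le (M.begEnd _) (hv₂max x' hx'))⟩
    · exact ⟨le_of_lt (lt_of_le_of_lt (hu₂min x' hx') (M.begEnd _)), hv₂max x' hx'⟩
  have key : M.σ (Sum.inr (v₁:V)) < M.σ (Sum.inl (u₂:V)) ∨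
      M.σ (Sum.inr (v₂:V)) < M.σ (Sum.inl (u₁:V)) := by
    by_contra hcon
    push_neg at hcon
    obtain ⟨h21, h12⟩ := hcon
    have hb2ne : M.σ (Sum.inl (u₂:V)) ≠ M.σ (Sum.inr (v₁:V)) := fun h => by
      simpa using M.inj h
    have hb1ne : M.σ (Sum.inl (u₁:V)) ≠ M.σ (Sum.inr (v₂:V)) := fun h => by
      simpa using M.inj h
    set p := max (M.σ (Sum.inl (u₁:V))) (M.σ (Sum.inl (u₂:V))) with hp
    have hpe1 : p < M.σ (Sum.inr (v₁:V)) := by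
      apply max_lt
      · exact lt_of_lt_of_le (M.begEnd _) (hv₁max u₁ hu₁)
      · omega
    have hpe2 : p < M.σ (Sum.inr (v₂:V)) := by
      apply max_lt
      · omega
      · exact lt_of_lt_of_le (M.begEnd _) (hv₂max u₂ hu₂)
    obtain ⟨x₁, hx₁, hc₁l, hc₁r⟩ :=
      cover_comp M le_sup_left c₁ hu₁ hv₁ p (le_max_left _ _) hpe1
    obtain ⟨x₂, hx₂, hc₂l, hc₂r⟩ :=
      cover_comp M le_sup_left c₂ hu₂ hv₂ p (le_max_right _ _) hpe2
    rcases cross x₁ hx₁ x₂ hx₂ with h | h <;> omega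
  rcases key with h | h
  · left
    intro ε₁ hε₁ ε₂ hε₂
    have b1 := bound₁ ε₁ hε₁
    have b2 := bound₂ ε₂ hε₂
    omega
  · right
    intro ε₂ hε₂ ε₁ hε₁
    have b1 := bound₁ ε₁ hε₁
    have b2 := bound₂ ε₂ hε₂
    omega
end

section
/- Let σ be an interval model of an interval graph G and let C ⊆ V(G) be a set of vertices such that all events of C occupy a consecutive block of positions in σ (i.e., for every event ε ∉ events(C), either σ(ε) < min positions of events(C) or σ(ε) > max positions of events(C)). Then C is a module of G: every vertex outside C is either adjacent to all of C or to none of C. -/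
/-!
A vertex `v ∉ C` has both of its events outside the block of `C`. If `end v` lies before
the block or `beg v` after it, the interval of `v` is disjoint from every interval of `C`;
otherwise it covers the whole block, so it meets every interval of `C`.
-/

section EventsOf

variable {V : Type*} {X : Set V} {v : V}

@[simp]
theorem inl_mem_eventsOf : Sum.inl v ∈ eventsOf X ↔ v ∈ X := by
  simp [eventsOf]

@[simp]
theorem inr_mem_eventsOf : Sum.inr v ∈ eventsOf X ↔ v ∈ X := by
  simp [eventsOf]

end EventsOf

theorem IntervalModel.adj_iff_s9 {V : Type*} [Fintype V] {G : SimpleGraph V}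
    (M : IntervalModel G) {u v : V} (huv : u ≠ v) :
    G.Adj u v ↔ M.σ (Sum.inl u) ≤ M.σ (Sum.inr v) ∧ M.σ (Sum.inl v) ≤ M.σ (Sum.inr u) := by
  rw [← not_iff_not, M.adjIff u v huv]
  omega

/-- If all events of `C` occupy a consecutive block of positions in an interval model of
`G`, then `C` is a module of `G`: every vertex outside `C` is adjacent to all of `C`
or to none of `C`. -/
theorem statement_9 {V : Type*} [Fintype V] (G : SimpleGraph V)
    (M : IntervalModel G) (C : Set V)
    (hblock : ∀ ε, ε ∉ eventsOf C →
      (∀ ε' ∈ eventsOf C, M.σ ε < M.σ ε') ∨ (∀ ε' ∈ eventsOf C, M.σ ε' < M.σ ε)) :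
    ∀ v, v ∉ C → (∀ c ∈ C, G.Adj v c) ∨ (∀ c ∈ C, ¬ G.Adj v c) := by
  intro v hv
  have hne : ∀ c ∈ C, v ≠ c := fun c hc h => hv (h ▸ hc)
  rcases hblock (Sum.inl v) (by simpa using hv) with hbeg | hbeg
  · rcases hblock (Sum.inr v) (by simpa using hv) with hend | hend
    · refine Or.inr fun c hc => ?_
      have := hend (Sum.inl c) (inl_mem_eventsOf.2 hc)
      rw [M.adj_iff_s9 (hne c hc)]
      omega
    · refine Or.inl fun c hc => ?_
      have := hbeg (Sum.inr c) (inr_mem_eventsOf.2 hc)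
      have := hend (Sum.inl c) (inl_mem_eventsOf.2 hc)
      rw [M.adj_iff_s9 (hne c hc)]
      omega
  · refine Or.inr fun c hc => ?_
    have := hbeg (Sum.inr c) (inr_mem_eventsOf.2 hc)
    rw [M.adj_iff_s9 (hne c hc)]
    omega
end

section
/- Let G be a graph, X ⊆ V(G), and suppose M₁, M₂ are connected components of G ∖ X that are modules of G with N_G(M₁) = N_G(M₂) = Y. Let F be a completion of G into an interval graph that touches no vertex of M₁ ∪ M₂. Then Y is a clique in G+F. -/
/-- If two adjacent vertices, their intervals intersect. -/
lemma adj_overlap {V : Type*} [Fintype V] {H : SimpleGraph V} (M : IntervalModel H)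
    {u v : V} (huv : H.Adj u v) :
    M.σ (Sum.inl u) ≤ M.σ (Sum.inr v) ∧ M.σ (Sum.inl v) ≤ M.σ (Sum.inr u) := by
  have hD : ¬(M.σ (Sum.inr v) < M.σ (Sum.inl u) ∨ M.σ (Sum.inr u) < M.σ (Sum.inl v)) :=
    fun d => (M.adjIff u v huv.ne).mpr d huv
  push_neg at hD
  exact hD

/-- Key lemma: if interval of `a` ends before interval of `b` begins, and `y ≠ y'`
are both adjacent to `a` and `b`, then `y` and `y'` are adjacent. -/
lemma key_adj {V : Type*} [Fintype V] {H : SimpleGraph V} (M : IntervalModel H)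
    {a b y y' : V} (hab : M.σ (Sum.inr a) < M.σ (Sum.inl b))
    (hya : H.Adj y a) (hyb : H.Adj y b) (hy'a : H.Adj y' a) (hy'b : H.Adj y' b)
    (hyy' : y ≠ y') : H.Adj y y' := by
  obtain ⟨h1, h2⟩ := adj_overlap M hya
  obtain ⟨h3, h4⟩ := adj_overlap M hyb
  obtain ⟨h5, h6⟩ := adj_overlap M hy'a
  obtain ⟨h7, h8⟩ := adj_overlap M hy'b
  by_contra h
  rcases (M.adjIff y y' hyy').mp h with h9 | h9 <;> omega

/-- Let `M₁, M₂` be distinct connected components of `G ∖ X` that are modules of `G`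
with `N_G(M₁) = N_G(M₂) = Y`, and let `F` be a completion of `G` into an interval
graph touching no vertex of `M₁ ∪ M₂`. Then `Y` is a clique in `G + F`. -/
theorem statement_10 {V : Type*} [Fintype V] (G F : SimpleGraph V)
    (hdisj : ∀ u v, F.Adj u v → ¬ G.Adj u v)
    (hint : Nonempty (IntervalModel (G ⊔ F)))
    (X : Set V) (c₁ c₂ : (G.induce Xᶜ).ConnectedComponent) (hne : c₁ ≠ c₂)
    (Y : Set V)
    (hmod₁ : ∀ v₁ ∈ compSupp c₁, ∀ v₂ ∈ compSupp c₁, ∀ w, w ∉ compSupp c₁ →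
      (G.Adj v₁ w ↔ G.Adj v₂ w))
    (hmod₂ : ∀ v₁ ∈ compSupp c₂, ∀ v₂ ∈ compSupp c₂, ∀ w, w ∉ compSupp c₂ →
      (G.Adj v₁ w ↔ G.Adj v₂ w))
    (hY₁ : Y = {w | w ∉ compSupp c₁ ∧ ∃ v ∈ compSupp c₁, G.Adj v w})
    (hY₂ : Y = {w | w ∉ compSupp c₂ ∧ ∃ v ∈ compSupp c₂, G.Adj v w})
    (huntouch : ∀ v w, F.Adj v w → v ∉ compSupp c₁ ∪ compSupp c₂) :
    (G ⊔ F).IsClique Y := by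
  obtain ⟨M⟩ := hint
  obtain ⟨a, ha⟩ := c₁.exists_rep
  obtain ⟨b, hb⟩ := c₂.exists_rep
  have haS : (a : V) ∈ compSupp c₁ := ⟨a, ha, rfl⟩
  have hbS : (b : V) ∈ compSupp c₂ := ⟨b, hb, rfl⟩
  -- a and b are distinct
  have habne : (a : V) ≠ (b : V) := by
    intro h
    apply hne
    rw [← ha, ← hb]
    congr 1
    exact Subtype.ext h
  -- a and b are not adjacent in G ⊔ F
  have hnadj : ¬ (G ⊔ F).Adj (a : V) (b : V) := by
    rintro (h | h)
    · apply hne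
      rw [← ha, ← hb]
      exact SimpleGraph.ConnectedComponent.sound
        (SimpleGraph.Adj.reachable (by exact h : (G.induce Xᶜ).Adj a b))
    · exact huntouch _ _ h (Or.inl haS)
  -- every y ∈ Y is adjacent (in G ⊔ F) to a and b
  have hadjY : ∀ y ∈ Y, (G ⊔ F).Adj y (a : V) ∧ (G ⊔ F).Adj y (b : V) := by
    intro y hy
    have hy1 : y ∉ compSupp c₁ ∧ ∃ v ∈ compSupp c₁, G.Adj v y := by
      have h := hy; rw [hY₁] at h; exact h
    have hy2 : y ∉ compSupp c₂ ∧ ∃ v ∈ compSupp c₂, G.Adj v y := by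
      have h := hy; rw [hY₂] at h; exact h
    obtain ⟨hyn1, v1, hv1, hadj1⟩ := hy1
    obtain ⟨hyn2, v2, hv2, hadj2⟩ := hy2
    constructor
    · exact Or.inl ((hmod₁ v1 hv1 (a : V) haS y hyn1).mp hadj1).symm
    · exact Or.inl ((hmod₂ v2 hv2 (b : V) hbS y hyn2).mp hadj2).symm
  intro y hy y' hy' hne'
  obtain ⟨hya, hyb⟩ := hadjY y hy
  obtain ⟨hy'a, hy'b⟩ := hadjY y' hy'
  rcases (M.adjIff (a : V) (b : V) habne).mp hnadj with h | h
  · exact key_adj M h hyb hya hy'b hy'a hne'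
  · exact key_adj M h hya hyb hy'a hy'b hne'
end

section
/- Let σ be an interval model of G+F where F is an inclusion-wise minimal completion of G, and let v₁, v₂ be vertices such that σ(end v₁) = σ(beg v₂) + 1 (the ending event of v₁ immediately follows the starting event of v₂). Then v₁ and v₂ are adjacent in G or v₁ = v₂. -/
theorem Nat.swap_succ_lt_swap_succ_iff {a m n : ℕ} (h₁ : ¬(m = a ∧ n = a + 1))
    (h₂ : ¬(m = a + 1 ∧ n = a)) :
    Equiv.swap a (a + 1) m < Equiv.swap a (a + 1) n ↔ m < n := by
  simp only [Equiv.swap_apply_def]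
  split_ifs <;> omega

theorem Function.Injective.comp_swap_lt_comp_swap_iff {α : Type*} [DecidableEq α]
    {σ : α → ℕ} (hσ : Function.Injective σ) {e₁ e₂ : α} (h : σ e₂ = σ e₁ + 1) {e f : α}
    (h₁ : ¬(e = e₁ ∧ f = e₂)) (h₂ : ¬(e = e₂ ∧ f = e₁)) :
    σ (Equiv.swap e₁ e₂ e) < σ (Equiv.swap e₁ e₂ f) ↔ σ e < σ f := by
  rw [← hσ.swap_apply, ← hσ.swap_apply, h]
  apply Nat.swap_succ_lt_swap_succ_iff
  · rintro ⟨he, hf⟩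
    exact h₁ ⟨hσ he, hσ (hf.trans h.symm)⟩
  · rintro ⟨he, hf⟩
    exact h₂ ⟨hσ (he.trans h.symm), hσ hf⟩

namespace IntervalModel

variable {V : Type*} [Fintype V] {H : SimpleGraph V}

theorem adj_of_overlap (M : IntervalModel H) {u v : V} (huv : u ≠ v)
    (hu : M.σ (Sum.inl u) < M.σ (Sum.inr v)) (hv : M.σ (Sum.inl v) < M.σ (Sum.inr u)) :
    H.Adj u v := by
  by_contra hn
  have := (M.adjIff u v huv).mp hn
  omega

open Classical in
noncomputable def swapEndBeg (M : IntervalModel H) {v₁ v₂ : V} (hne : v₁ ≠ v₂)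
    (h : M.σ (Sum.inr v₁) = M.σ (Sum.inl v₂) + 1) :
    IntervalModel (H.deleteEdges {s(v₁, v₂)}) where
  σ := M.σ ∘ Equiv.swap (Sum.inl v₂) (Sum.inr v₁)
  inj := M.inj.comp (Equiv.injective _)
  lb _ := M.lb _
  ub _ := M.ub _
  surj i h₁ h₂ := by
    obtain ⟨e, he⟩ := M.surj i h₁ h₂
    exact ⟨Equiv.swap (Sum.inl v₂) (Sum.inr v₁) e, by simp [he]⟩
  begEnd v := by
    rw [Function.comp_apply, Function.comp_apply, M.inj.comp_swap_lt_comp_swap_iff h]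
    · exact M.begEnd v
    · rintro ⟨h₂, h₁⟩
      exact hne ((Sum.inr_injective h₁).symm.trans (Sum.inl_injective h₂))
    · simp
  adjIff u v huv := by
    simp only [SimpleGraph.deleteEdges_adj, Set.mem_singleton_iff, not_and, not_not,
      Function.comp_apply]
    by_cases hp : s(u, v) = s(v₁, v₂)
    · have hlt : M.σ (Sum.inl v₂) < M.σ (Sum.inr v₁) := by omega
      rcases Sym2.eq_iff.mp hp with ⟨rfl, rfl⟩ | ⟨rfl, rfl⟩ <;> simp [hp, hlt]
    · have hswap : ∀ x y, s(y, x) ≠ s(v₁, v₂) →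
          (M.σ (Equiv.swap (Sum.inl v₂) (Sum.inr v₁) (Sum.inr x)) <
              M.σ (Equiv.swap (Sum.inl v₂) (Sum.inr v₁) (Sum.inl y)) ↔
            M.σ (Sum.inr x) < M.σ (Sum.inl y)) := by
        intro x y hxy
        apply M.inj.comp_swap_lt_comp_swap_iff h
        · simp
        · rintro ⟨hx, hy⟩
          cases Sum.inr_injective hx
          cases Sum.inl_injective hy
          exact hxy Sym2.eq_swap
      rw [hswap v u hp, hswap u v (by rwa [Sym2.eq_swap]), ← M.adjIff u v huv]
      tauto

end IntervalModel

theorem statement_11_general {V : Type*} [Fintype V] (G F : SimpleGraph V)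
    (hmin : ∀ F' : SimpleGraph V, F' ≤ F → Nonempty (IntervalModel (G ⊔ F')) → F' = F)
    (M : IntervalModel (G ⊔ F)) (v₁ v₂ : V)
    (h : M.σ (Sum.inr v₁) = M.σ (Sum.inl v₂) + 1) :
    G.Adj v₁ v₂ ∨ v₁ = v₂ := by
  by_contra! ⟨hG, hne⟩
  have hF : F.Adj v₁ v₂ := by
    refine (M.adj_of_overlap hne ?_ (by omega)).resolve_left hG
    have := M.begEnd v₁
    have := M.begEnd v₂
    omega
  have hG_eq : G.deleteEdges {s(v₁, v₂)} = G := by simpa using hG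
  have hF_eq : F.deleteEdges {s(v₁, v₂)} = F := by
    refine hmin _ (F.deleteEdges_le _) ⟨?_⟩
    simpa only [SimpleGraph.deleteEdges_sup, hG_eq] using M.swapEndBeg hne h
  have hF' : ¬ (F.deleteEdges {s(v₁, v₂)}).Adj v₁ v₂ := by simp
  rw [hF_eq] at hF'
  exact hF' hF

/-- Let `σ` be an interval model of `G + F` where `F` is an inclusion-wise minimal
completion of `G`, and suppose `σ(end v₁) = σ(beg v₂) + 1`. Then `v₁` and `v₂`
are adjacent in `G` or `v₁ = v₂`. -/
theorem statement_11 {V : Type*} [Fintype V] (G F : SimpleGraph V)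
    (hdisj : ∀ u v, F.Adj u v → ¬ G.Adj u v)
    (hmin : ∀ F' : SimpleGraph V, F' ≤ F → Nonempty (IntervalModel (G ⊔ F')) → F' = F)
    (M : IntervalModel (G ⊔ F)) (v₁ v₂ : V)
    (h : M.σ (Sum.inr v₁) = M.σ (Sum.inl v₂) + 1) :
    G.Adj v₁ v₂ ∨ v₁ = v₂ :=
  statement_11_general G F hmin M v₁ v₂ h
end

section
/- Let G be a graph and F a completion of G. Let P be an induced path in G with vertices x₁,…,x_s in order, and let R be an induced path in H = G+F from x₁ to x_s with all vertices in V(P). Then s − |V(R)| ≤ |F|; i.e., the number of vertices of P not used by R is at most the number of fill-in edges. -/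
namespace List

variable {α : Type*}

theorem IsChain.cons_filter_ne [DecidableEq α] {r : α → α → Prop} {v a : α} {l : List α}
    (hv : ∀ x ∈ a :: l, ∀ y ∈ l, r x v → r v y → r x y) (h : (a :: l).IsChain r) :
    (a :: l.filter (· ≠ v)).IsChain r := by
  induction l generalizing a with
  | nil => simp
  | cons b l ih =>
    rw [isChain_cons_cons] at h
    by_cases hb : b = v
    · subst hb
      rw [filter_cons_of_neg (by simp)]
      refine ih (fun x hx y hy => hv x (cons_subset_cons a (subset_cons_self b l) hx) y
        (mem_cons_of_mem _ hy)) ?_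
      cases l with
      | nil => simp
      | cons c l =>
        rw [isChain_cons_cons] at h ⊢
        exact ⟨hv a mem_cons_self c (by simp) h.1 h.2.1, h.2.2⟩
    · rw [filter_cons_of_pos (by simpa using hb)]
      exact isChain_cons_cons.2 ⟨h.1, ih (fun x hx y hy =>
        hv x (mem_cons_of_mem _ hx) y (mem_cons_of_mem _ hy)) h.2⟩

theorem getLast?_filter_of_getLast? {p : α → Bool} {l : List α} {b : α}
    (h : l.getLast? = some b) (hb : p b) : (l.filter p).getLast? = some b := by
  obtain ⟨l, rfl⟩ := getLast?_eq_some_iff.1 h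
  simp [filter_append, hb]

end List

theorem Finset.exists_lt_forall_not_lt_lt {α : Type*} [LinearOrder α] {S : Finset α} {u v : α}
    (hu : u ∈ S) (hvu : v < u) : ∃ b ∈ S, v < b ∧ ∀ k ∈ S, ¬(v < k ∧ k < b) := by
  obtain ⟨b, hb, hmin⟩ := (S.filter (v < ·)).exists_min_image id ⟨u, by simp [hu, hvu]⟩
  rw [Finset.mem_filter] at hb
  exact ⟨b, hb.1, hb.2, fun k hk hkb =>
    (hmin k (Finset.mem_filter.2 ⟨hk, hkb.1⟩)).not_gt hkb.2⟩

namespace SimpleGraph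

variable {α : Type*} [LinearOrder α] (H : SimpleGraph α)

def ContainsOrderedPath (S : Finset α) : Prop :=
  ∀ a ∈ S, ∀ b ∈ S, a < b → (∀ k ∈ S, ¬(a < k ∧ k < b)) → H.Adj a b

open scoped Classical in
noncomputable def chords (S : Finset α) : Finset (α × α) :=
  (S ×ˢ S).filter fun p => H.Adj p.1 p.2 ∧ ∃ k ∈ S, p.1 < k ∧ k < p.2

/-- Walks may stay put (`a = b`), so that deleting all visits of a vertex from a walk
leaves a walk. -/
structure IsWalkAcross (S : Finset α) (R : List α) : Prop where
  chain : R.IsChain fun a b => a = b ∨ H.Adj a b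
  mem : ∀ x ∈ R, x ∈ S
  head_le : ∀ a ∈ R.head?, ∀ x ∈ S, a ≤ x
  le_getLast : ∀ b ∈ R.getLast?, ∀ x ∈ S, x ≤ b
  ne_nil : R ≠ []

variable {H} {S T : Finset α} {R : List α} {v : α}

theorem mem_chords {p : α × α} :
    p ∈ H.chords S ↔
      (p.1 ∈ S ∧ p.2 ∈ S) ∧ H.Adj p.1 p.2 ∧ ∃ k ∈ S, p.1 < k ∧ k < p.2 := by
  simp [chords]

theorem chords_mono (h : T ⊆ S) : H.chords T ⊆ H.chords S := by
  intro p hp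
  obtain ⟨⟨h1, h2⟩, hadj, k, hk, hlt⟩ := mem_chords.1 hp
  exact mem_chords.2 ⟨⟨h h1, h h2⟩, hadj, k, h hk, hlt⟩

theorem card_chords_toDual : (chords (α := αᵒᵈ) H S).card = (H.chords S).card := by
  refine Finset.card_nbij' Prod.swap Prod.swap ?_ ?_ (fun _ _ => rfl) (fun _ _ => rfl)
  · intro p hp
    obtain ⟨⟨ha, hb⟩, hadj, k, hk, h1, h2⟩ := mem_chords (α := αᵒᵈ).1 hp
    exact mem_chords.2 ⟨⟨hb, ha⟩, hadj.symm, k, hk, h2, h1⟩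
  · intro p hp
    obtain ⟨⟨ha, hb⟩, hadj, k, hk, h1, h2⟩ := mem_chords.1 hp
    exact mem_chords (α := αᵒᵈ).2 ⟨⟨hb, ha⟩, hadj.symm, k, hk, h2, h1⟩

theorem ContainsOrderedPath.toDual (h : H.ContainsOrderedPath S) :
    ContainsOrderedPath (α := αᵒᵈ) H S :=
  fun a ha b hb hab hgap => (h b hb a ha hab fun k hk hk' => hgap k hk hk'.symm).symm

theorem ContainsOrderedPath.erase (h : H.ContainsOrderedPath S)
    (hv : H.IsClique (H.neighborSet v ∩ S)) : H.ContainsOrderedPath (S.erase v) := by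
  intro a ha b hb hab hgap
  rw [Finset.mem_erase] at ha hb
  by_cases hv' : v ∈ S ∧ a < v ∧ v < b
  · obtain ⟨hvS, hav, hvb⟩ := hv'
    have hav' : H.Adj a v := h a ha.2 v hvS hav fun k hk hk' =>
      hgap k (Finset.mem_erase.2 ⟨hk'.2.ne, hk⟩) ⟨hk'.1, hk'.2.trans hvb⟩
    have hvb' : H.Adj v b := h v hvS b hb.2 hvb fun k hk hk' =>
      hgap k (Finset.mem_erase.2 ⟨hk'.1.ne', hk⟩) ⟨hav.trans hk'.1, hk'.2⟩
    exact hv ⟨hav'.symm, ha.2⟩ ⟨hvb', hb.2⟩ hab.ne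
  · refine h a ha.2 b hb.2 hab fun k hk hk' => hgap k (Finset.mem_erase.2 ⟨?_, hk⟩) hk'
    rintro rfl
    exact hv' ⟨hk, hk'⟩

theorem isChain_cons_filter_ne (hv : H.IsClique (H.neighborSet v ∩ S)) {a : α} {l : List α}
    (hS : ∀ x ∈ a :: l, x ∈ S) (h : (a :: l).IsChain fun a b => a = b ∨ H.Adj a b) :
    (a :: l.filter (· ≠ v)).IsChain fun a b => a = b ∨ H.Adj a b := by
  refine h.cons_filter_ne fun x hx y hy hxv hvy => ?_
  rcases hxv with rfl | hxv
  · exact hvy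
  rcases hvy with rfl | hvy
  · exact Or.inr hxv
  by_cases hxy : x = y
  · exact Or.inl hxy
  exact Or.inr (hv ⟨hxv.symm, hS x hx⟩ ⟨hvy, hS y (List.mem_cons_of_mem _ hy)⟩ hxy)

theorem IsWalkAcross.reverse (h : H.IsWalkAcross S R) :
    IsWalkAcross (α := αᵒᵈ) H S R.reverse where
  chain := List.isChain_reverse.2 <| h.chain.imp fun _ _ hab => hab.imp Eq.symm Adj.symm
  mem x hx := h.mem x (List.mem_reverse.1 hx)
  head_le a ha := h.le_getLast a (List.head?_reverse (l := R) ▸ ha)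
  le_getLast b hb := h.head_le b (List.getLast?_reverse (l := R) ▸ hb)
  ne_nil := List.reverse_ne_nil_iff.2 h.ne_nil

theorem IsWalkAcross.of_cons_cons {a : α} {l : List α} (h : H.IsWalkAcross S (a :: a :: l)) :
    H.IsWalkAcross S (a :: l) where
  chain := h.chain.tail
  mem x hx := h.mem x (List.mem_cons_of_mem _ hx)
  head_le := h.head_le
  le_getLast b hb := h.le_getLast b (by rwa [List.getLast?_cons_cons])
  ne_nil := List.cons_ne_nil _ _

theorem IsWalkAcross.filter_ne (hR : H.IsWalkAcross S R) (hv : H.IsClique (H.neighborSet v ∩ S))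
    (hhead : v ∉ R.head?) (hlast : v ∉ R.getLast?) :
    H.IsWalkAcross (S.erase v) (R.filter (· ≠ v)) := by
  obtain ⟨a, l, rfl⟩ := List.exists_cons_of_ne_nil hR.ne_nil
  obtain ⟨b, hb⟩ : ∃ b, (a :: l).getLast? = some b :=
    ⟨_, List.getLast?_eq_some_getLast hR.ne_nil⟩
  have hav : a ≠ v := by rintro rfl; simp at hhead
  have hbv : b ≠ v := by rintro rfl; exact hlast hb
  have hfilter : (a :: l).filter (· ≠ v) = a :: l.filter (· ≠ v) :=
    List.filter_cons_of_pos (by simpa using hav)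
  refine ⟨?_, fun x hx => ?_, fun a' ha' x hx => ?_, fun b' hb' x hx => ?_,
    hfilter ▸ List.cons_ne_nil _ _⟩
  · exact hfilter ▸ isChain_cons_filter_ne hv hR.mem hR.chain
  · obtain ⟨hx, hxv⟩ := List.mem_filter.1 hx
    exact Finset.mem_erase.2 ⟨by simpa using hxv, hR.mem x hx⟩
  · rw [hfilter, List.head?_cons, Option.mem_some_iff] at ha'
    exact ha' ▸ hR.head_le a (by simp) x (Finset.mem_of_mem_erase hx)
  · rw [List.getLast?_filter_of_getLast? hb (by simpa using hbv), Option.mem_some_iff] at hb'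
    exact hb' ▸ hR.le_getLast b hb x (Finset.mem_of_mem_erase hx)

theorem IsWalkAcross.restart {l : List α} {p : α} (hpath : H.ContainsOrderedPath S)
    (hR : H.IsWalkAcross S (v :: l)) (hv : H.IsClique (H.neighborSet v ∩ S))
    (hlast : v ∉ (v :: l).getLast?) (hpS : p ∈ S) (hvp : v < p)
    (hpgap : ∀ k ∈ S, ¬(v < k ∧ k < p)) :
    H.IsWalkAcross (S.erase v) (p :: l.filter (· ≠ v)) := by
  obtain ⟨b, hb⟩ : ∃ b, (v :: l).getLast? = some b :=
    ⟨_, List.getLast?_eq_some_getLast hR.ne_nil⟩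
  have hbv : b ≠ v := by rintro rfl; exact hlast hb
  have hfilter : (v :: l).filter (· ≠ v) = l.filter (· ≠ v) :=
    List.filter_cons_of_neg (by simp)
  refine ⟨?_, ?_, fun a ha x hx => ?_, fun b' hb' x hx => ?_, List.cons_ne_nil _ _⟩
  · exact hfilter ▸ isChain_cons_filter_ne hv (List.forall_mem_cons.2 ⟨hpS, hR.mem⟩)
      (List.isChain_cons_cons.2 ⟨Or.inr (hpath v (hR.mem v (by simp)) p hpS hvp hpgap).symm,
        hR.chain⟩)
  · refine List.forall_mem_cons.2 ⟨Finset.mem_erase.2 ⟨hvp.ne', hpS⟩, fun x hx => ?_⟩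
    obtain ⟨hx, hxv⟩ := List.mem_filter.1 hx
    exact Finset.mem_erase.2 ⟨by simpa using hxv, hR.mem x (List.mem_cons_of_mem _ hx)⟩
  · obtain ⟨hxv, hxS⟩ := Finset.mem_erase.1 hx
    rw [List.head?_cons, Option.mem_some_iff] at ha
    exact ha ▸ not_lt.1 fun hxp =>
      hpgap x hxS ⟨(hR.head_le v (by simp) x hxS).lt_of_ne hxv.symm, hxp⟩
  · have hlast' := List.getLast?_filter_of_getLast? hb (p := (· ≠ v)) (by simpa using hbv)
    simp only [hfilter, List.getLast?_cons, Option.mem_some_iff] at hlast' hb'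
    rw [hlast'] at hb'
    exact hb' ▸ hR.le_getLast b hb x (Finset.mem_of_mem_erase hx)

theorem IsWalkAcross.exists_erase_of_interior (hpath : H.ContainsOrderedPath S)
    (hR : H.IsWalkAcross S R) (hvS : v ∈ S) (hv : H.IsClique (H.neighborSet v ∩ S))
    (hhead : v ∉ R.head?) (hlast : v ∉ R.getLast?) :
    ∃ R', H.IsWalkAcross (S.erase v) R' ∧
      R'.length + (H.chords (S.erase v)).card < R.length + (H.chords S).card := by
  obtain ⟨a, l, rfl⟩ := List.exists_cons_of_ne_nil hR.ne_nil
  obtain ⟨b, hb⟩ : ∃ b, (a :: l).getLast? = some b :=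
    ⟨_, List.getLast?_eq_some_getLast hR.ne_nil⟩
  have hav : a < v := (hR.head_le a (by simp) v hvS).lt_of_ne (by rintro rfl; simp at hhead)
  have hvb : v < b := (hR.le_getLast b hb v hvS).lt_of_ne (by rintro rfl; exact hlast hb)
  obtain ⟨p, hpS, hpv, hpgap⟩ : ∃ p ∈ S, p < v ∧ ∀ k ∈ S, ¬(k < v ∧ p < k) :=
    Finset.exists_lt_forall_not_lt_lt (α := αᵒᵈ) (hR.mem a (by simp)) hav
  obtain ⟨q, hqS, hvq, hqgap⟩ :=
    Finset.exists_lt_forall_not_lt_lt (hR.mem b (List.mem_of_getLast? hb)) hvb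
  have hpq : (p, q) ∈ H.chords S := by
    refine mem_chords.2
      ⟨⟨hpS, hqS⟩, hv ⟨?_, hpS⟩ ⟨?_, hqS⟩ (hpv.trans hvq).ne, v, hvS, hpv, hvq⟩
    · exact (hpath p hpS v hvS hpv fun k hk hk' => hpgap k hk hk'.symm).symm
    · exact hpath v hvS q hqS hvq hqgap
  have hpq' : (p, q) ∉ H.chords (S.erase v) := by
    rintro hmem
    obtain ⟨-, -, k, hk, hpk, hkq⟩ := mem_chords.1 hmem
    obtain ⟨hkv, hk⟩ := Finset.mem_erase.1 hk
    rcases hkv.lt_or_gt with hkv | hkv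
    · exact hpgap k hk ⟨hkv, hpk⟩
    · exact hqgap k hk ⟨hkv, hkq⟩
  refine ⟨_, hR.filter_ne hv hhead hlast, ?_⟩
  have := Finset.card_lt_card ⟨chords_mono (S.erase_subset v), fun h => hpq' (h hpq)⟩
  have := List.length_filter_le (· ≠ v) (a :: l)
  omega

theorem IsWalkAcross.exists_erase_of_head (hpath : H.ContainsOrderedPath S)
    (hR : H.IsWalkAcross S R) (hv : H.IsClique (H.neighborSet v ∩ S))
    (hhead : R.head? = some v) (hlast : v ∉ R.getLast?) :
    ∃ R', H.IsWalkAcross (S.erase v) R' ∧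
      R'.length + (H.chords (S.erase v)).card < R.length + (H.chords S).card := by
  obtain ⟨l, rfl⟩ := List.head?_eq_some_iff.1 hhead
  obtain ⟨b, hb⟩ : ∃ b, (v :: l).getLast? = some b :=
    ⟨_, List.getLast?_eq_some_getLast hR.ne_nil⟩
  have hbS := hR.mem b (List.mem_of_getLast? hb)
  have hvb : v < b :=
    (hR.head_le v (by simp) b hbS).lt_of_ne (by rintro rfl; exact hlast hb)
  obtain ⟨p, hpS, hvp, hpgap⟩ := Finset.exists_lt_forall_not_lt_lt hbS hvb
  have hR' := hR.restart hpath hv hlast hpS hvp hpgap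
  have hbl : b ∈ l.filter (· ≠ v) := List.mem_filter.2
    ⟨(List.mem_cons.1 (List.mem_of_getLast? hb)).resolve_left hvb.ne', by simpa using hvb.ne'⟩
  obtain ⟨w, l', hw⟩ := List.exists_cons_of_ne_nil (List.ne_nil_of_mem hbl)
  have hlen := List.length_filter_le (· ≠ v) l
  rw [hw] at hR' hlen
  rcases eq_or_ne w p with rfl | hwp
  · have := Finset.card_le_card (chords_mono (H := H) (S.erase_subset v))
    exact ⟨_, hR'.of_cons_cons, by simp only [List.length_cons] at hlen ⊢; omega⟩
  · obtain ⟨hwv, hwS⟩ := Finset.mem_erase.1 (hR'.mem w (by simp))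
    have hvw : H.Adj v w := by
      have := isChain_cons_filter_ne hv hR.mem hR.chain
      rw [hw, List.isChain_cons_cons] at this
      exact this.1.resolve_left hwv.symm
    have hpw : p < w := (hR'.head_le p rfl w (hR'.mem w (by simp))).lt_of_ne hwp.symm
    have hvw' : (v, w) ∈ H.chords S :=
      mem_chords.2 ⟨⟨hR.mem v (by simp), hwS⟩, hvw, p, hpS, hvp, hpw⟩
    have hvw'' : (v, w) ∉ H.chords (S.erase v) := fun h =>
      (S.notMem_erase v) (mem_chords.1 h).1.1
    have := Finset.card_lt_card ⟨chords_mono (S.erase_subset v), fun h => hvw'' (h hvw')⟩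
    exact ⟨_, hR', by simp only [List.length_cons] at hlen ⊢; omega⟩

theorem IsWalkAcross.exists_erase_of_getLast (hpath : H.ContainsOrderedPath S)
    (hR : H.IsWalkAcross S R) (hv : H.IsClique (H.neighborSet v ∩ S))
    (hlast : R.getLast? = some v) (hhead : v ∉ R.head?) :
    ∃ R', H.IsWalkAcross (S.erase v) R' ∧
      R'.length + (H.chords (S.erase v)).card < R.length + (H.chords S).card := by
  obtain ⟨R', hR', hlt⟩ := hR.reverse.exists_erase_of_head hpath.toDual hv
    ((List.head?_reverse (l := R)).trans hlast)
    (fun h => hhead ((List.getLast?_reverse (l := R)).symm.trans h))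
  refine ⟨R'.reverse, hR'.reverse, ?_⟩
  convert hlt using 2
  · exact List.length_reverse
  · exact card_chords_toDual.symm
  · exact List.length_reverse.symm
  · exact card_chords_toDual.symm

theorem IsWalkAcross.card_le_length_add_card_chords
    (hsimp : ∀ T ⊆ S, T.Nonempty → ∃ v ∈ T, H.IsClique (H.neighborSet v ∩ T))
    (hpath : H.ContainsOrderedPath S) (hR : H.IsWalkAcross S R) :
    S.card ≤ R.length + (H.chords S).card := by
  induction hn : S.card using Nat.strong_induction_on generalizing S R with
  | _ n ih =>
  subst hn
  obtain ⟨v, hvS, hv⟩ := hsimp S subset_rfl ⟨_, hR.mem _ (List.head_mem hR.ne_nil)⟩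
  by_cases hsingle : v ∈ R.head? ∧ v ∈ R.getLast?
  · obtain ⟨hhead, hlast⟩ := hsingle
    have : S.card ≤ 1 := Finset.card_le_one.2 fun x hx y hy =>
      ((hR.le_getLast v hlast x hx).antisymm (hR.head_le v hhead x hx)).trans
        ((hR.le_getLast v hlast y hy).antisymm (hR.head_le v hhead y hy)).symm
    have := List.length_pos_of_ne_nil hR.ne_nil
    omega
  obtain ⟨R', hR', hlt⟩ : ∃ R', H.IsWalkAcross (S.erase v) R' ∧
      R'.length + (H.chords (S.erase v)).card < R.length + (H.chords S).card := by
    by_cases hhead : v ∈ R.head?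
    · exact hR.exists_erase_of_head hpath hv hhead fun hlast => hsingle ⟨hhead, hlast⟩
    by_cases hlast : v ∈ R.getLast?
    · exact hR.exists_erase_of_getLast hpath hv hlast hhead
    · exact hR.exists_erase_of_interior hpath hvS hv hhead hlast
  have := ih _ (Finset.card_erase_lt_of_mem hvS)
    (fun T hT => hsimp T (hT.trans (S.erase_subset v))) (hpath.erase hv) hR' rfl
  have := Finset.card_erase_add_one hvS
  omega

end SimpleGraph

theorem IntervalModel.adj_of_adj_of_adj {V : Type*} [Fintype V] {K : SimpleGraph V}
    (M : IntervalModel K) {u v w : V} (hu : K.Adj v u) (hw : K.Adj v w) (huw : u ≠ w)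
    (hvu : M.σ (.inr v) ≤ M.σ (.inr u)) (hvw : M.σ (.inr v) ≤ M.σ (.inr w)) :
    K.Adj u w := by
  have hu' := mt (M.adjIff v u hu.ne).2 (not_not.2 hu)
  have hw' := mt (M.adjIff v w hw.ne).2 (not_not.2 hw)
  by_contra h
  rcases (M.adjIff u w huw).1 h with h | h <;> omega

theorem IntervalModel.exists_isClique_comap {V ι : Type*} [Fintype V] {K : SimpleGraph V}
    (M : IntervalModel K) {x : ι → V} {T : Finset ι} (hx : Set.InjOn x T) (hT : T.Nonempty) :
    ∃ v ∈ T, (K.comap x).IsClique ((K.comap x).neighborSet v ∩ T) := by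
  obtain ⟨v, hvT, hmin⟩ := T.exists_min_image (fun i => M.σ (.inr (x i))) hT
  exact ⟨v, hvT, fun u hu w hw huw => M.adj_of_adj_of_adj hu.1 hw.1
    (fun h => huw (hx hu.2 hw.2 h)) (hmin u hu.2) (hmin w hw.2)⟩

namespace SimpleGraph

variable {V : Type*} (K : SimpleGraph V) {x : ℕ → V} {s : ℕ}

theorem containsOrderedPath_comap_range (hxadj : ∀ i, i + 1 < s → K.Adj (x i) (x (i + 1))) :
    (K.comap x).ContainsOrderedPath (Finset.range s) := by
  intro a _ b hb hab hgap
  rw [Finset.mem_range] at hb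
  obtain rfl : b = a + 1 := by
    by_contra hne
    exact hgap (a + 1) (Finset.mem_range.2 (by omega)) ⟨by omega, by omega⟩
  exact hxadj a hb

theorem isWalkAcross_comap_range {y : ℕ → V} {t : ℕ} (hs : 0 < s) (ht : 0 < t)
    (hxinj : Set.InjOn x (Set.Iio s)) (hyadj : ∀ i, i + 1 < t → K.Adj (y i) (y (i + 1)))
    (hy0 : y 0 = x 0) (hyt : y (t - 1) = x (s - 1)) (hsub : ∀ i < t, ∃ j < s, y i = x j) :
    (K.comap x).IsWalkAcross (Finset.range s)
      ((List.range t).map (Function.invFunOn x (Set.Iio s) ∘ y)) := by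
  set ρ := Function.invFunOn x (Set.Iio s)
  have hmem : ∀ i < t, ∃ j ∈ Set.Iio s, x j = y i := fun i hi => by
    obtain ⟨j, hj, h⟩ := hsub i hi
    exact ⟨j, hj, h.symm⟩
  have hρx : ∀ j < s, ρ (x j) = j := fun j hj => hxinj.leftInvOn_invFunOn hj
  refine ⟨?_, ?_, ?_, ?_, ?_⟩
  · refine List.isChain_map _ |>.2 <| (List.isChain_range _ _).2 fun i hi => Or.inr ?_
    simp only [Function.comp, comap_adj, ρ, Function.invFunOn_eq (hmem i (by omega)),
      Function.invFunOn_eq (hmem (i + 1) (by omega))]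
    exact hyadj i (by omega)
  · simp only [List.mem_map, List.mem_range, Finset.mem_range]
    rintro _ ⟨i, hi, rfl⟩
    exact Function.invFunOn_mem (hmem i hi)
  · intro a ha j _
    simp only [List.head?_map, List.head?_range, ht.ne', if_false, Option.map_some,
      Function.comp, hy0, hρx 0 hs, Option.mem_some_iff] at ha
    exact ha ▸ Nat.zero_le j
  · intro b hb j hj
    simp only [List.getLast?_map, List.getLast?_range, ht.ne', if_false, Option.map_some,
      Function.comp, hyt, hρx (s - 1) (by omega), Option.mem_some_iff] at hb
    exact hb ▸ Nat.le_sub_one_of_lt (Finset.mem_range.1 hj)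
  · simpa using ht.ne'

theorem card_chords_comap_sup_le [Fintype V] (G F : SimpleGraph V) [DecidableRel F.Adj]
    (hxinj : Set.InjOn x (Set.Iio s))
    (hxind : ∀ i j, j < s → i + 1 < j → ¬ G.Adj (x i) (x j)) :
    (((G ⊔ F).comap x).chords (Finset.range s)).card ≤ F.edgeFinset.card := by
  refine Finset.card_le_card_of_injOn (fun p => s(x p.1, x p.2)) ?_ ?_
  · intro p hp
    obtain ⟨⟨-, h2⟩, hadj, k, -, hk1, hk2⟩ := mem_chords.1 hp
    rw [Finset.mem_range] at h2
    simp only [Finset.mem_coe, mem_edgeFinset, mem_edgeSet]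
    exact hadj.resolve_left (hxind _ _ h2 (by omega))
  · rintro ⟨a, b⟩ hp ⟨c, d⟩ hq h
    obtain ⟨⟨ha, hb⟩, -, k, -, hak, hkb⟩ := mem_chords.1 hp
    obtain ⟨⟨hc, hd⟩, -, l, -, hcl, hld⟩ := mem_chords.1 hq
    simp only [Finset.mem_range] at ha hb hc hd
    have inj := fun i j (hi : i < s) (hj : j < s) => @hxinj i hi j hj
    rcases Sym2.eq_iff.1 h with ⟨h1, h2⟩ | ⟨h1, h2⟩
    · rw [inj a c ha hc h1, inj b d hb hd h2]
    · have := inj a d ha hd h1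
      have := inj b c hb hc h2
      omega

end SimpleGraph

theorem statement_16_general {V : Type*} [Fintype V] [DecidableEq V]
    (G F : SimpleGraph V) [DecidableRel F.Adj]
    (hint : Nonempty (IntervalModel (G ⊔ F)))
    (s t : ℕ) (hs : 0 < s) (ht : 0 < t) (x y : ℕ → V)
    (hxinj : Set.InjOn x (Set.Iio s))
    (hxadj : ∀ i, i + 1 < s → G.Adj (x i) (x (i + 1)))
    (hxind : ∀ i j, j < s → i + 1 < j → ¬ G.Adj (x i) (x j))
    (hyadj : ∀ i, i + 1 < t → (G ⊔ F).Adj (y i) (y (i + 1)))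
    (hy0 : y 0 = x 0) (hyt : y (t - 1) = x (s - 1))
    (hsub : ∀ i < t, ∃ j < s, y i = x j) :
    s - t ≤ F.edgeFinset.card := by
  obtain ⟨M⟩ := hint
  have hR := SimpleGraph.isWalkAcross_comap_range (G ⊔ F) hs ht hxinj hyadj hy0 hyt hsub
  have hcount := hR.card_le_length_add_card_chords
    (fun T hT => M.exists_isClique_comap (hxinj.mono fun i hi => Finset.mem_range.1 (hT hi)))
    (SimpleGraph.containsOrderedPath_comap_range _ fun i hi => Or.inl (hxadj i hi))
  have hchords := SimpleGraph.card_chords_comap_sup_le G F hxinj hxind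
  simp only [Finset.card_range, List.length_map, List.length_range] at hcount
  omega

/-- Let `F` be a completion of `G`, let `P = x₀, …, x_{s-1}` be an induced path in `G`,
and let `R = y₀, …, y_{t-1}` be an induced path in `G + F` from `x₀` to `x_{s-1}` with
all vertices in `V(P)`. Then `s - t ≤ |F|`: the number of vertices of `P` not used by
`R` is at most the number of fill-in edges. -/
theorem statement_16 {V : Type*} [Fintype V] [DecidableEq V]
    (G F : SimpleGraph V) [DecidableRel F.Adj]
    (hdisj : ∀ u v, F.Adj u v → ¬ G.Adj u v)
    (hint : Nonempty (IntervalModel (G ⊔ F)))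
    (s t : ℕ) (hs : 0 < s) (ht : 0 < t) (x y : ℕ → V)
    (hxinj : Set.InjOn x (Set.Iio s)) (hyinj : Set.InjOn y (Set.Iio t))
    (hxadj : ∀ i, i + 1 < s → G.Adj (x i) (x (i + 1)))
    (hxind : ∀ i j, j < s → i + 1 < j → ¬ G.Adj (x i) (x j))
    (hyadj : ∀ i, i + 1 < t → (G ⊔ F).Adj (y i) (y (i + 1)))
    (hyind : ∀ i j, j < t → i + 1 < j → ¬ (G ⊔ F).Adj (y i) (y j))
    (hy0 : y 0 = x 0) (hyt : y (t - 1) = x (s - 1))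
    (hsub : ∀ i < t, ∃ j < s, y i = x j) :
    s - t ≤ F.edgeFinset.card :=
  statement_16_general G F hint s t hs ht x y hxinj hxadj hxind hyadj hy0 hyt hsub
end

section
/- Let σ be an interval model of an interval graph G and let Ω ⊆ V(G) be a maximal clique of G. Then there exists a position p with Ω = Ω_σ(p) such that the event at position p is a starting event and the event at position p+1 is an ending event. -/
/-!
Every section `Ω_σ(p)` is a clique, and the intervals of a clique pairwise intersect, so all
of them contain the latest starting point of the clique: a maximal clique is a section
`Ω_σ(p)`. If the event at `p` were the end of some `u`, the section at `p - 1` would be that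
section plus `u`; if the event at `p + 1` were the start of some `w`, the section at `p + 1`
would be that section plus `w`. Either way maximality is violated.
-/

namespace IntervalModel

variable {V : Type*} [Fintype V] {G : SimpleGraph V} (M : IntervalModel G)

theorem σ_inl_ne_σ_inr (u v : V) : M.σ (Sum.inl u) ≠ M.σ (Sum.inr v) :=
  fun h => Sum.inl_ne_inr (M.inj h)

theorem σ_inl_lt_σ_inr_of_adj {u v : V} (h : G.Adj u v) :
    M.σ (Sum.inl u) < M.σ (Sum.inr v) := by
  have hdisj : ¬ (_ ∨ _) := fun hd => (M.adjIff u v h.ne).2 hd h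
  rw [not_or, not_lt, not_lt] at hdisj
  exact lt_of_le_of_ne hdisj.1 (M.σ_inl_ne_σ_inr u v)

theorem isClique_intervalSection (p : ℕ) : G.IsClique (intervalSection M p) := by
  intro u ⟨hu₁, hu₂⟩ v ⟨hv₁, hv₂⟩ huv
  by_contra hna
  rcases (M.adjIff u v huv).1 hna with h | h <;> omega

theorem exists_subset_intervalSection_of_isClique {Ω : Set V} (hclique : G.IsClique Ω)
    (hne : Ω.Nonempty) : ∃ p, Ω ⊆ intervalSection M p := by
  obtain ⟨u, huΩ, hu_max⟩ := Ω.exists_max_image (fun v => M.σ (Sum.inl v)) Ω.toFinite hne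
  refine ⟨M.σ (Sum.inl u), fun v hv => ⟨hu_max v hv, ?_⟩⟩
  by_cases huv : u = v
  · exact huv ▸ M.begEnd u
  · exact M.σ_inl_lt_σ_inr_of_adj (hclique huΩ hv huv)

theorem intervalSection_ssubset_of_σ_inr_eq {u : V} {p : ℕ} (hu : M.σ (Sum.inr u) = p) :
    intervalSection M p ⊂ intervalSection M (p - 1) := by
  have hbeg := M.begEnd u
  have hsub : intervalSection M p ⊆ intervalSection M (p - 1) := fun v ⟨hv₁, hv₂⟩ => by
    have := M.σ_inl_ne_σ_inr v u
    exact ⟨by omega, by omega⟩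
  exact Set.ssubset_iff_of_subset hsub |>.mpr
    ⟨u, ⟨by omega, by omega⟩, fun ⟨_, h⟩ => by omega⟩

theorem intervalSection_ssubset_of_σ_inl_eq {w : V} {p : ℕ} (hw : M.σ (Sum.inl w) = p + 1) :
    intervalSection M p ⊂ intervalSection M (p + 1) := by
  have hbeg := M.begEnd w
  have hsub : intervalSection M p ⊆ intervalSection M (p + 1) := fun v ⟨hv₁, hv₂⟩ => by
    have := M.σ_inl_ne_σ_inr w v
    exact ⟨by omega, by omega⟩
  exact Set.ssubset_iff_of_subset hsub |>.mpr
    ⟨w, ⟨by omega, by omega⟩, fun ⟨h, _⟩ => by omega⟩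

theorem exists_σ_eq_of_mem_intervalSection {v : V} {p : ℕ} (hv : v ∈ intervalSection M p) :
    (∃ e, M.σ e = p) ∧ ∃ e, M.σ e = p + 1 := by
  obtain ⟨hv₁, hv₂⟩ := hv
  have := M.lb (Sum.inl v)
  have := M.ub (Sum.inr v)
  exact ⟨M.surj p (by omega) (by omega), M.surj (p + 1) (by omega) (by omega)⟩

end IntervalModel

/-- Every maximal clique `Ω` of an interval graph `G` with model `σ` is a section
`Ω_σ(p)` drawn between a starting and an ending event: the event at position `p` is
a starting event and the event at position `p + 1` is an ending event. -/
theorem statement_19 {V : Type*} [Fintype V] [Nonempty V] (G : SimpleGraph V)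
    (M : IntervalModel G) (Ω : Set V)
    (hclique : G.IsClique Ω)
    (hmax : ∀ Ω' : Set V, G.IsClique Ω' → Ω ⊆ Ω' → Ω' = Ω) :
    ∃ p : ℕ, Ω = intervalSection M p ∧
      (∃ v₂, M.σ (Sum.inl v₂) = p) ∧ (∃ v₁, M.σ (Sum.inr v₁) = p + 1) := by
  have not_ssubset : ∀ q, ¬ Ω ⊂ intervalSection M q := fun q h =>
    h.ne' (hmax _ (M.isClique_intervalSection q) h.subset)
  have hne : Ω.Nonempty := by
    obtain ⟨v⟩ := ‹Nonempty V›
    refine Set.nonempty_iff_ne_empty.2 fun hempty => Set.singleton_ne_empty v ?_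
    rw [← hempty]
    exact hmax {v} (G.isClique_singleton v) (hempty ▸ Set.empty_subset _)
  obtain ⟨p, hsub⟩ := M.exists_subset_intervalSection_of_isClique hclique hne
  have hΩ : Ω = intervalSection M p := (hmax _ (M.isClique_intervalSection p) hsub).symm
  obtain ⟨⟨e, he⟩, ⟨f, hf⟩⟩ := M.exists_σ_eq_of_mem_intervalSection (hsub hne.some_mem)
  refine ⟨p, hΩ, ?_, ?_⟩
  · rcases e with v₂ | u
    · exact ⟨v₂, he⟩
    · exact absurd (hΩ ▸ M.intervalSection_ssubset_of_σ_inr_eq he) (not_ssubset _)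
  · rcases f with w | v₁
    · exact absurd (hΩ ▸ M.intervalSection_ssubset_of_σ_inl_eq hf) (not_ssubset _)
    · exact ⟨v₁, hf⟩
end
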